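/- If v : ℝ³ → ℝ is a harmonic C² function on an open set Θ ⊆ ℝ³, then u = v ∘ h is harmonic on the open set h⁻¹(Θ) ⊆ ℝ⁴, where h is the complex Hopf map h(z₁,z₂) = (|z₁|² − |z₂|², 2·conj(z₁)·z₂). -/

import Mathlib

/-- The second derivative at `0` of `t ↦ u (p + t e)`, i.e. the second
directional derivative of `u` at `p` in the direction `e`. -/
noncomputable def secondDerivAlong {E : Type*} [NormedAddCommGroup E]
    [NormedSpace ℝ E] (u : E → ℝ) (p e : E) : ℝ :=
  deriv (deriv (fun t : ℝ => u (p + t • e))) 0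

/-- The Euclidean Laplacian on `ℝ × ℂ ≅ ℝ³`. -/
noncomputable def lap3 (v : ℝ × ℂ → ℝ) (p : ℝ × ℂ) : ℝ :=
  secondDerivAlong v p (1, 0) + secondDerivAlong v p (0, 1) +
    secondDerivAlong v p (0, Complex.I)

/-- The Euclidean Laplacian on `ℂ × ℂ ≅ ℝ⁴`. -/
noncomputable def lap4 (u : ℂ × ℂ → ℝ) (p : ℂ × ℂ) : ℝ :=
  secondDerivAlong u p (1, 0) + secondDerivAlong u p (Complex.I, 0) +
    secondDerivAlong u p (0, 1) + secondDerivAlong u p (0, Complex.I)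

/-- The complex Hopf map `h(z₁,z₂) = (|z₁|² − |z₂|², 2 conj(z₁) z₂)`. -/
noncomputable def hopfMap (z : ℂ × ℂ) : ℝ × ℂ :=
  (‖z.1‖ ^ 2 - ‖z.2‖ ^ 2, 2 * (starRingEnd ℂ) z.1 * z.2)

/-!
The Hopf map `h` is a quadratic polynomial map, so `h (z + t • e)` is a quadratic curve
`h z + t • dh_z e + t² • h e`, and the second directional derivative of `v ∘ h` along `e` is
`D²v (dh_z e) (dh_z e) + 2 Dv (h e)`. Summing over the four coordinate directions, the
first-order terms cancel because `h` is itself harmonic, and the second-order terms add up to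
`4 ‖z‖² Δv (h z)` because `dh_z` is horizontally conformal with factor `4 ‖z‖²`.
-/

open Complex

section QuadraticCurve

variable {E G : Type*} [NormedAddCommGroup E] [NormedSpace ℝ E]
  [NormedAddCommGroup G] [NormedSpace ℝ G]

theorem hasDerivAt_quadraticCurve (x a b : E) (t : ℝ) :
    HasDerivAt (fun s : ℝ => x + s • a + s ^ 2 • b) (a + (2 * t) • b) t :=
  ((((hasDerivAt_id t).smul_const a).const_add x).add
    ((hasDerivAt_pow 2 t).smul_const b)).congr_deriv (by simp)

theorem deriv_deriv_comp_quadraticCurve {v : E → G} {x : E} (hv : ContDiffAt ℝ 2 v x)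
    (a b : E) : deriv (deriv fun t : ℝ => v (x + t • a + t ^ 2 • b)) 0 =
      fderiv ℝ (fderiv ℝ v) x a a + (2 : ℝ) • fderiv ℝ v x b := by
  set c : ℝ → E := fun t => x + t • a + t ^ 2 • b
  have hc0 : c 0 = x := by simp [c]
  have hc : ∀ t, HasDerivAt c (a + (2 * t) • b) t := hasDerivAt_quadraticCurve x a b
  have hv_near : ∀ᶠ t in nhds (0 : ℝ), DifferentiableAt ℝ v (c t) := by
    have hv_near_x : ∀ᶠ y in nhds (c 0), DifferentiableAt ℝ v y := by
      rw [hc0]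
      exact (hv.eventually (by simp)).mono fun y hy => hy.differentiableAt (by norm_num)
    exact (hc 0).continuousAt.eventually hv_near_x
  have hderiv : deriv (fun t => v (c t)) =ᶠ[nhds 0]
      fun t => fderiv ℝ v (c t) (a + (2 * t) • b) := by
    filter_upwards [hv_near] with t ht
    exact (ht.hasFDerivAt.comp_hasDerivAt t (hc t)).deriv
  have hDv : HasFDerivAt (fderiv ℝ v) (fderiv ℝ (fderiv ℝ v) x) (c 0) := by
    rw [hc0]
    exact ((hv.fderiv_right (m := 1) le_rfl).differentiableAt one_ne_zero).hasFDerivAt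
  have hdir : HasDerivAt (fun t : ℝ => a + (2 * t) • b) ((2 : ℝ) • b) 0 := by
    simpa using (((hasDerivAt_id (0 : ℝ)).const_mul 2).smul_const b).const_add a
  rw [hderiv.deriv_eq]
  refine ((hDv.comp_hasDerivAt 0 (hc 0)).clm_apply hdir).deriv.trans ?_
  simp [hc0]

theorem secondDerivAlong_eq_of_forall_eq_quadraticCurve {F : Type*} [NormedAddCommGroup F]
    [NormedSpace ℝ F] {u : F → ℝ} {v : E → ℝ} {p e : F} {x a b : E} (hv : ContDiffAt ℝ 2 v x)
    (h : ∀ t : ℝ, u (p + t • e) = v (x + t • a + t ^ 2 • b)) :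
    secondDerivAlong u p e = fderiv ℝ (fderiv ℝ v) x a a + 2 * fderiv ℝ v x b := by
  rw [secondDerivAlong, funext h, deriv_deriv_comp_quadraticCurve hv, smul_eq_mul]

theorem secondDerivAlong_eq_fderiv_fderiv {v : E → ℝ} {x : E} (hv : ContDiffAt ℝ 2 v x)
    (e : E) : secondDerivAlong v x e = fderiv ℝ (fderiv ℝ v) x e e := by
  simpa using secondDerivAlong_eq_of_forall_eq_quadraticCurve hv (b := 0) fun t => by simp

end QuadraticCurve

theorem lap3_eq_fderiv_fderiv {v : ℝ × ℂ → ℝ} {x : ℝ × ℂ} (hv : ContDiffAt ℝ 2 v x) :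
    lap3 v x = fderiv ℝ (fderiv ℝ v) x (1, 0) (1, 0) + fderiv ℝ (fderiv ℝ v) x (0, 1) (0, 1) +
      fderiv ℝ (fderiv ℝ v) x (0, I) (0, I) := by
  simp only [lap3, secondDerivAlong_eq_fderiv_fderiv hv]

theorem bilin_expand_realProdComplex (B : (ℝ × ℂ) →L[ℝ] (ℝ × ℂ) →L[ℝ] ℝ) (a c : ℝ × ℂ) :
    B a c =
      a.1 * c.1 * B (1, 0) (1, 0) + a.1 * c.2.re * B (1, 0) (0, 1)
        + a.1 * c.2.im * B (1, 0) (0, I)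
        + a.2.re * c.1 * B (0, 1) (1, 0) + a.2.re * c.2.re * B (0, 1) (0, 1)
        + a.2.re * c.2.im * B (0, 1) (0, I)
        + a.2.im * c.1 * B (0, I) (1, 0) + a.2.im * c.2.re * B (0, I) (0, 1)
        + a.2.im * c.2.im * B (0, I) (0, I) := by
  have hcoord : ∀ y : ℝ × ℂ, y = y.1 • ((1 : ℝ), (0 : ℂ)) + y.2.re • ((0 : ℝ), (1 : ℂ)) +
      y.2.im • ((0 : ℝ), I) := fun y => by simp
  conv_lhs => rw [hcoord a, hcoord c]
  simp only [map_add, map_smul, add_apply, FunLike.coe_smul,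
    Pi.smul_apply, smul_eq_mul]
  ring

/-- `dh_z`, the differential at `z` of the quadratic map `hopfMap`. -/
noncomputable def hopfMapDeriv (z w : ℂ × ℂ) : ℝ × ℂ :=
  (2 * (starRingEnd ℂ z.1 * w.1).re - 2 * (starRingEnd ℂ z.2 * w.2).re,
    2 * (starRingEnd ℂ z.1 * w.2 + starRingEnd ℂ w.1 * z.2))

theorem hopfMap_add_smul (z w : ℂ × ℂ) (t : ℝ) :
    hopfMap (z + t • w) = hopfMap z + t • hopfMapDeriv z w + t ^ 2 • hopfMap w := by
  simp only [hopfMap, hopfMapDeriv, Prod.ext_iff, Complex.ext_iff, Complex.sq_norm,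
    Complex.normSq_apply, Prod.fst_add, Prod.snd_add, Prod.smul_fst, Prod.smul_snd,
    Complex.add_re, Complex.add_im, Complex.real_smul, Complex.mul_re,
    Complex.mul_im, Complex.ofReal_re, Complex.ofReal_im, Complex.conj_re, Complex.conj_im,
    Complex.re_ofNat, Complex.im_ofNat, smul_eq_mul]
  exact ⟨by ring, by ring, by ring⟩

/-- Horizontal conformality of the Hopf map: `dh_z` maps an orthonormal frame of `ℝ⁴` to a
tight frame of `ℝ³` with frame constant `4 ‖z‖²`. -/
theorem sum_bilin_hopfMapDeriv_self (B : (ℝ × ℂ) →L[ℝ] (ℝ × ℂ) →L[ℝ] ℝ) (z : ℂ × ℂ) :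
    B (hopfMapDeriv z (1, 0)) (hopfMapDeriv z (1, 0)) +
        B (hopfMapDeriv z (I, 0)) (hopfMapDeriv z (I, 0)) +
        B (hopfMapDeriv z (0, 1)) (hopfMapDeriv z (0, 1)) +
        B (hopfMapDeriv z (0, I)) (hopfMapDeriv z (0, I)) =
      4 * (‖z.1‖ ^ 2 + ‖z.2‖ ^ 2) * (B (1, 0) (1, 0) + B (0, 1) (0, 1) + B (0, I) (0, I)) := by
  rw [bilin_expand_realProdComplex B (hopfMapDeriv z (1, 0)),
    bilin_expand_realProdComplex B (hopfMapDeriv z (I, 0)),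
    bilin_expand_realProdComplex B (hopfMapDeriv z (0, 1)),
    bilin_expand_realProdComplex B (hopfMapDeriv z (0, I))]
  simp [hopfMapDeriv, Complex.sq_norm, Complex.normSq_apply]
  ring

theorem lap4_comp_hopfMap {v : ℝ × ℂ → ℝ} {z : ℂ × ℂ} (hv : ContDiffAt ℝ 2 v (hopfMap z)) :
    lap4 (fun w => v (hopfMap w)) z = 4 * (‖z.1‖ ^ 2 + ‖z.2‖ ^ 2) * lap3 v (hopfMap z) := by
  set D := fderiv ℝ v (hopfMap z)
  have hdir : ∀ e, secondDerivAlong (fun w => v (hopfMap w)) z e =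
      fderiv ℝ (fderiv ℝ v) (hopfMap z) (hopfMapDeriv z e) (hopfMapDeriv z e) +
        2 * D (hopfMap e) :=
    fun e => secondDerivAlong_eq_of_forall_eq_quadraticCurve hv fun t =>
      congrArg v (hopfMap_add_smul z e t)
  have hfirst : D (hopfMap (1, 0)) + D (hopfMap (I, 0)) + D (hopfMap (0, 1)) +
      D (hopfMap (0, I)) = 0 := by
    have hopf_harmonic : hopfMap (1, 0) + hopfMap (I, 0) + hopfMap (0, 1) + hopfMap (0, I) = 0 := by
      simp [hopfMap, Prod.ext_iff]
    rw [← map_add, ← map_add, ← map_add, hopf_harmonic, map_zero]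
  rw [lap4, hdir, hdir, hdir, hdir, lap3_eq_fderiv_fderiv hv, ← sum_bilin_hopfMapDeriv_self]
  linear_combination 2 * hfirst

/-- If `v` is harmonic and `C²` on an open set `Θ ⊂ ℝ³`, then `v ∘ h` is
harmonic on `h⁻¹(Θ) ⊂ ℝ⁴`. -/
theorem harmonic_comp_hopfMap (Θ : Set (ℝ × ℂ)) (hΘ : IsOpen Θ)
    (v : ℝ × ℂ → ℝ) (hv : ContDiffOn ℝ 2 v Θ)
    (hharm : ∀ x ∈ Θ, lap3 v x = 0) :
    ∀ z ∈ hopfMap ⁻¹' Θ, lap4 (fun w => v (hopfMap w)) z = 0 := by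
  intro z hz
  rw [lap4_comp_hopfMap (hv.contDiffAt (hΘ.mem_nhds hz)), hharm _ hz, mul_zero]
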